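/- Let g, f be formal power series over ℚ with g(0) = 1, f(0) = 0 and with the coefficient of x^1 in f nonzero, and define the Sheffer triangle entries S(n,m) := n!·[x^n]( g(x)·f(x)^m / m! ) for integers n, m ≥ 0. Work in the ring (ℚ[[t]])[[y]] of formal power series in y over ℚ[[t]], and let X = x(t;y) be the element of (ℚ[[t]])[[y]] with zero constant term satisfying X − t·f(X) = y (the compositional inverse of y(t;x) = x − t·f(x)). Let H be the formal power series over ℚ with H(0) = 0 whose formal derivative is g. Then for all integers d ≥ 0 and m ≥ 0, the coefficient of t^m·y^{d+1} in H(x(t;y)) equals S(d+m, m)/(d+1)!. Equivalently, the e.g.f. Σ_{d≥0} GDS(d,t)·y^{d+1}/(d+1)! of the ordinary generating functions GDS(d,t) := Σ_{m≥0} S(d+m,m) t^m of the diagonal sequences of the Sheffer triangle equals H(x(t;y)) − H(0). -/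

import Mathlib

open PowerSeries

/-- Formal composition (substitution) `f(a)` of formal power series: substituting `a`
(which is intended to have zero constant term) into `f`. -/
noncomputable def PowerSeries.substitute {R : Type*} [CommRing R] (a f : R⟦X⟧) : R⟦X⟧ :=
  PowerSeries.mk fun n => ∑ k ∈ Finset.range (n + 1),
    PowerSeries.coeff (R := R) k f * PowerSeries.coeff (R := R) n (a ^ k)

/-!
Write `t` for the variable of the coefficient ring and `y` for the outer variable of
`K⟦X⟧⟦X⟧`, and `∂ₜ` for `coeffwiseDerivation (d⁄dX K)`. Differentiating `x = y + t f(x)` in `t`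
and in `y` gives `∂ₜ x = f(x) ∂_y x`, hence `∂ₜ Q(x) = Q'(x) f(x) ∂_y x = ∂_y (J Q)(x)` with
`J Q = lagrangeShift f Q = ∫ Q' f`. Comparing coefficients,
`[tᵏ yⁿ] Q(x) = C(n + k, k) [y^(n+k)] Jᵏ Q` by induction on `k`, starting from `x = y` at `t = 0`. Since `(Jᵐ H)' = g fᵐ`, taking `Q = H`, `k = m` and
`n = d + 1` gives `S(d + m, m) / (d + 1)!`.
-/

open Finset

namespace PowerSeries

section Substitution

variable {R : Type*} [CommRing R]

theorem coeff_pow_eq_zero_of_lt {a : R⟦X⟧} (ha : constantCoeff a = 0) {n k : ℕ} (h : n < k) :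
    coeff n (a ^ k) = 0 :=
  coeff_of_lt_order n <| (Nat.cast_lt.mpr h).trans_le (le_order_pow_of_constantCoeff_eq_zero k ha)

theorem coeff_subst_eq_sum {a : R⟦X⟧} (ha : constantCoeff a = 0) (h : R⟦X⟧) (n : ℕ) :
    coeff n (h.subst a) = ∑ k ∈ range (n + 1), coeff k h * coeff n (a ^ k) := by
  rw [coeff_subst' (HasSubst.of_constantCoeff_zero' ha),
    finsum_eq_finsetSum_of_support_subset _ (s := range (n + 1))]
  · rfl
  · intro k hk
    by_contra hkn
    simp only [coe_range, Set.mem_Iio, not_lt] at hkn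
    exact hk (by simp only [coeff_pow_eq_zero_of_lt ha (show n < k by omega), smul_zero])

theorem substitute_eq_subst {a : R⟦X⟧} (ha : constantCoeff a = 0) (h : R⟦X⟧) :
    a.substitute h = h.subst a := by
  ext n
  rw [substitute, coeff_mk, coeff_subst_eq_sum ha]

theorem coeff_mul_subst_eq_sum {a : R⟦X⟧} (ha : constantCoeff a = 0) (b h : R⟦X⟧) (n : ℕ) :
    coeff n (b * h.subst a) = ∑ k ∈ range (n + 1), coeff k h * coeff n (b * a ^ k) := by
  have extend : ∀ p ∈ antidiagonal n, coeff p.1 b * coeff p.2 (h.subst a)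
      = ∑ k ∈ range (n + 1), coeff k h * (coeff p.1 b * coeff p.2 (a ^ k)) := by
    rintro ⟨i, j⟩ hij
    rw [HasAntidiagonal.mem_antidiagonal] at hij
    rw [coeff_subst_eq_sum ha, mul_sum]
    refine sum_subset (range_subset_range.mpr (by omega)) (fun k _ hk => ?_) |>.trans
      (sum_congr rfl fun k _ => by ring)
    rw [coeff_pow_eq_zero_of_lt ha (by simp only [mem_range, not_lt] at hk; omega), mul_zero,
      mul_zero]
  rw [coeff_mul, sum_congr rfl extend, sum_comm]
  simp_rw [coeff_mul, mul_sum]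

end Substitution

section Derivative

variable {R : Type*} [CommSemiring R]

/-- For `R = K⟦X⟧`, `Derivation.leibniz` does not apply to `d⁄dX R`: instance search finds
`algebraPowerSeries` instead of the algebra structure `derivative` is built with. -/
theorem derivative_mul (f g : R⟦X⟧) : d⁄dX R (f * g) = f * d⁄dX R g + g * d⁄dX R f :=
  Derivation.leibniz _ f g

theorem derivative_map {S : Type*} [CommSemiring S] (φ : R →+* S) (h : R⟦X⟧) :
    d⁄dX S (map φ h) = map φ (d⁄dX R h) := by
  ext n
  simp [coeff_derivative]

end Derivative

section CoeffwiseDerivation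

variable {A R : Type*} [CommRing A] [CommRing R] [Algebra A R]

noncomputable def coeffwiseDerivation (D : Derivation A R R) : Derivation A R⟦X⟧ R⟦X⟧ :=
  Derivation.mk'
    { toFun := fun F => mk fun n => D (coeff n F)
      map_add' := fun F G => by ext n; simp
      map_smul' := fun c F => by ext n; simp }
    fun F G => by
      ext n
      simp only [smul_eq_mul]
      rw [mul_comm G]
      simp only [LinearMap.coe_mk, AddHom.coe_mk, coeff_mk, coeff_mul, map_sum, map_add,
        Derivation.leibniz, smul_eq_mul, ← sum_add_distrib]
      exact sum_congr rfl fun p _ => by ring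

@[simp]
theorem coeff_coeffwiseDerivation (D : Derivation A R R) (F : R⟦X⟧) (n : ℕ) :
    coeff n (coeffwiseDerivation D F) = D (coeff n F) := by
  simp [coeffwiseDerivation]

theorem coeffwiseDerivation_C (D : Derivation A R R) (r : R) :
    coeffwiseDerivation D (C r) = C (D r) := by
  ext n
  simp [coeff_C, apply_ite D]

theorem coeffwiseDerivation_X (D : Derivation A R R) : coeffwiseDerivation D X = 0 := by
  ext n
  simp [coeff_X, apply_ite D]

theorem constantCoeff_coeffwiseDerivation (D : Derivation A R R) (F : R⟦X⟧) :
    constantCoeff (coeffwiseDerivation D F) = D (constantCoeff F) := by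
  rw [← coeff_zero_eq_constantCoeff_apply, coeff_coeffwiseDerivation,
    coeff_zero_eq_constantCoeff_apply]

theorem coeffwiseDerivation_subst (D : Derivation A R R) {a : R⟦X⟧} (ha : constantCoeff a = 0)
    {h : R⟦X⟧} (hh : ∀ k, D (coeff k h) = 0) :
    coeffwiseDerivation D (h.subst a) = (d⁄dX R h).subst a * coeffwiseDerivation D a := by
  set Da := coeffwiseDerivation D a
  have top_vanishes : ∀ n, coeff n (Da * a ^ n) = 0 := fun n => by
    have hDa : (X : R⟦X⟧) ∣ Da := X_dvd_iff.mpr <| by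
      rw [constantCoeff_coeffwiseDerivation, ha, map_zero]
    have hdvd : (X : R⟦X⟧) ^ (n + 1) ∣ Da * a ^ n :=
      pow_succ' (X : R⟦X⟧) n ▸ mul_dvd_mul hDa (pow_dvd_pow_of_dvd (X_dvd_iff.mpr ha) n)
    exact X_pow_dvd_iff.mp hdvd n (Nat.lt_succ_self n)
  ext n
  have lhs : coeff n (coeffwiseDerivation D (h.subst a))
      = ∑ k ∈ range (n + 1), coeff k h * coeff n (coeffwiseDerivation D (a ^ k)) := by
    simp only [coeff_coeffwiseDerivation, coeff_subst_eq_sum ha, map_sum, Derivation.leibniz, hh,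
      smul_eq_mul, mul_zero, add_zero]
  rw [lhs, mul_comm, coeff_mul_subst_eq_sum ha, sum_range_succ', sum_range_succ, top_vanishes]
  simp only [pow_zero, Derivation.map_one_eq_zero, map_zero, mul_zero, add_zero]
  refine sum_congr rfl fun j _ => ?_
  rw [Derivation.leibniz_pow, add_tsub_cancel_right, coeff_derivative, smul_eq_mul, mul_comm Da,
    nsmul_eq_mul, ← map_natCast (C (R := R)), mul_assoc, coeff_C_mul]
  push_cast
  ring

end CoeffwiseDerivation

section Antiderivative

variable {K : Type*} [Field K] [CharZero K]

noncomputable def antiderivative (P : K⟦X⟧) : K⟦X⟧ :=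
  mk fun n => if n = 0 then 0 else coeff (n - 1) P / n

theorem derivative_antiderivative (P : K⟦X⟧) : d⁄dX K (antiderivative P) = P := by
  ext n
  rw [coeff_derivative, antiderivative, coeff_mk, if_neg n.succ_ne_zero, Nat.add_sub_cancel]
  field_simp
  push_cast
  ring

end Antiderivative

end PowerSeries

section LagrangeEquation

theorem coeffwiseDerivation_eq_subst_mul_derivative {K : Type*} [CommRing K] (f : K⟦X⟧)
    {x : K⟦X⟧⟦X⟧} (hx0 : constantCoeff x = 0) (hx : x - C (R := K⟦X⟧) X * (map C f).subst x = X) :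
    coeffwiseDerivation (d⁄dX K) x = (map C f).subst x * d⁄dX K⟦X⟧ x := by
  have hx' : x = X + C (R := K⟦X⟧) X * (map C f).subst x := by rw [← hx]; ring
  set u := (d⁄dX K⟦X⟧ (map C f)).subst x
  have hy : d⁄dX K⟦X⟧ x = 1 + C (R := K⟦X⟧) X * (u * d⁄dX K⟦X⟧ x) := by
    conv_lhs => rw [hx']
    rw [map_add, derivative_X, derivative_mul, derivative_C, mul_zero, add_zero,
      derivative_subst (HasSubst.of_constantCoeff_zero' hx0)]
  have ht : coeffwiseDerivation (d⁄dX K) x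
      = (map C f).subst x + C (R := K⟦X⟧) X * (u * coeffwiseDerivation (d⁄dX K) x) := by
    conv_lhs => rw [hx']
    rw [map_add, coeffwiseDerivation_X, Derivation.leibniz, coeffwiseDerivation_C, derivative_X,
      map_one, smul_eq_mul, smul_eq_mul, mul_one, zero_add,
      coeffwiseDerivation_subst _ hx0 (fun k => by rw [coeff_map, derivative_C])]
    ring
  linear_combination d⁄dX K⟦X⟧ x * ht - coeffwiseDerivation (d⁄dX K) x * hy

theorem coeff_zero_coeff_subst_map_C {K : Type*} [CommRing K] (f : K⟦X⟧) {x : K⟦X⟧⟦X⟧}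
    (hx0 : constantCoeff x = 0) (hx : x - C (R := K⟦X⟧) X * (map C f).subst x = X)
    (Q : K⟦X⟧) (n : ℕ) :
    coeff 0 (coeff n ((map C Q).subst x)) = coeff n Q := by
  have x_at_t_zero : map (constantCoeff (R := K)) x = X := by
    simpa using congrArg (map (constantCoeff (R := K))) hx
  have map_subst_x : map (constantCoeff (R := K)) ((map C Q).subst x) = Q := by
    refine (map_subst (HasSubst.of_constantCoeff_zero' hx0) _).trans ?_
    change (map _ (map C Q)).subst (map (constantCoeff (R := K)) x) = Q
    ext n
    simp [x_at_t_zero]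
  rw [coeff_zero_eq_constantCoeff_apply, ← coeff_map, map_subst_x]

variable {K : Type*} [Field K] [CharZero K]

noncomputable def lagrangeShift (f Q : K⟦X⟧) : K⟦X⟧ :=
  antiderivative (d⁄dX K Q * f)

theorem derivative_lagrangeShift (f Q : K⟦X⟧) :
    d⁄dX K (lagrangeShift f Q) = d⁄dX K Q * f :=
  derivative_antiderivative _

theorem coeffwiseDerivation_subst_map_C (f : K⟦X⟧) {x : K⟦X⟧⟦X⟧}
    (hx0 : constantCoeff x = 0) (hx : x - C (R := K⟦X⟧) X * (map C f).subst x = X) (Q : K⟦X⟧) :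
    coeffwiseDerivation (d⁄dX K) ((map C Q).subst x)
      = d⁄dX K⟦X⟧ ((map C (lagrangeShift f Q)).subst x) := by
  have hsubst : HasSubst x := HasSubst.of_constantCoeff_zero' hx0
  rw [coeffwiseDerivation_subst _ hx0 (fun k => by rw [coeff_map, derivative_C]),
    derivative_subst hsubst, derivative_map, derivative_map, derivative_lagrangeShift, map_mul,
    subst_mul hsubst, coeffwiseDerivation_eq_subst_mul_derivative f hx0 hx, ← derivative_map]
  ring

theorem coeff_coeff_subst_map_C (f : K⟦X⟧) {x : K⟦X⟧⟦X⟧}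
    (hx0 : constantCoeff x = 0) (hx : x - C (R := K⟦X⟧) X * (map C f).subst x = X)
    (k n : ℕ) (Q : K⟦X⟧) :
    coeff k (coeff n ((map C Q).subst x))
      = (n + k).choose k * coeff (n + k) ((lagrangeShift f)^[k] Q) := by
  induction k generalizing n Q with
  | zero => simp [coeff_zero_coeff_subst_map_C f hx0 hx]
  | succ k ih =>
    have step := congrArg (fun F => coeff k (coeff n F))
      (coeffwiseDerivation_subst_map_C f hx0 hx Q)
    simp only [coeff_coeffwiseDerivation, coeff_derivative] at step
    rw [show ((n : K⟦X⟧) + 1) = C ((n : K) + 1) by simp, coeff_mul_C, ih] at step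
    have hchoose : ((n + 1 + k).choose (k + 1) : K) * (k + 1) = (n + 1 + k).choose k * (n + 1) := by
      exact_mod_cast (Nat.choose_succ_right_eq (n + 1 + k) k).trans (by rw [Nat.add_sub_cancel])
    rw [Function.iterate_succ_apply, show n + (k + 1) = n + 1 + k by omega]
    refine mul_right_cancel₀ (Nat.cast_add_one_ne_zero k) ?_
    linear_combination
      step - coeff (n + 1 + k) ((lagrangeShift f)^[k] (lagrangeShift f Q)) * hchoose

theorem derivative_iterate_lagrangeShift (f Q : K⟦X⟧) (k : ℕ) :
    d⁄dX K ((lagrangeShift f)^[k] Q) = d⁄dX K Q * f ^ k := by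
  induction k with
  | zero => simp
  | succ k ih =>
    rw [Function.iterate_succ_apply', derivative_lagrangeShift, ih, pow_succ, mul_assoc]

end LagrangeEquation

theorem sheffer_diagonal_egf_general (g f : ℚ⟦X⟧)
    (S : ℕ → ℕ → ℚ)
    (hS : ∀ n m : ℕ, S n m = (n.factorial : ℚ) * coeff (R := ℚ) n (g * f ^ m) / m.factorial)
    (H : ℚ⟦X⟧) (hH : H.derivativeFun = g)
    (Xser : (ℚ⟦X⟧)⟦X⟧)
    (hX0 : constantCoeff (R := ℚ⟦X⟧) Xser = 0)
    (hXeq : Xser - PowerSeries.C (R := ℚ⟦X⟧) PowerSeries.X *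
        PowerSeries.substitute Xser (PowerSeries.map (PowerSeries.C (R := ℚ)) f)
      = PowerSeries.X) :
    ∀ d m : ℕ,
      coeff (R := ℚ) m (coeff (R := ℚ⟦X⟧) (d + 1)
          (PowerSeries.substitute Xser (PowerSeries.map (PowerSeries.C (R := ℚ)) H)))
        = S (d + m) m / (d + 1).factorial := by
  intro d m
  rw [substitute_eq_subst hX0] at hXeq ⊢
  have hderiv : d⁄dX ℚ ((lagrangeShift f)^[m] H) = g * f ^ m := by
    rw [derivative_iterate_lagrangeShift, ← hH]
    rfl
  have hcoeff := congrArg (coeff (d + m)) hderiv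
  rw [coeff_derivative] at hcoeff
  rw [coeff_coeff_subst_map_C f hX0 hXeq, hS, ← hcoeff,
    Nat.cast_choose ℚ (by omega : m ≤ d + 1 + m), show d + 1 + m - m = d + 1 by omega,
    show d + 1 + m = d + m + 1 by omega, Nat.factorial_succ]
  push_cast
  field_simp

/-- **E.g.f. of the o.g.f.s of the diagonal sequences of a Sheffer triangle.**
Let `S = (g, f)` be a Sheffer triangle, with entries `S(n,m) = n!·[x^n](g·f^m/m!)`.
Let `X = x(t;y)` be the series in `(ℚ[[t]])[[y]]` with zero constant term satisfying
`X − t·f(X) = y`, and let `H` be the antiderivative of `g` with `H(0) = 0`.  Then the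
coefficient of `t^m·y^(d+1)` in `H(x(t;y))` is `S(d+m,m)/(d+1)!`; i.e.
`H(x(t;y)) − H(0)` is the e.g.f. `Σ_d GDS(d,t)·y^(d+1)/(d+1)!` of the o.g.f.s
`GDS(d,t) = Σ_m S(d+m,m)·t^m` of the diagonals of the triangle. -/
theorem sheffer_diagonal_egf (g f : ℚ⟦X⟧)
    (hg : constantCoeff (R := ℚ) g = 1) (hf0 : constantCoeff (R := ℚ) f = 0) (hf1 : coeff (R := ℚ) 1 f ≠ 0)
    (S : ℕ → ℕ → ℚ)
    (hS : ∀ n m : ℕ, S n m = (n.factorial : ℚ) * coeff (R := ℚ) n (g * f ^ m) / m.factorial)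
    (H : ℚ⟦X⟧) (hH0 : constantCoeff (R := ℚ) H = 0) (hH : H.derivativeFun = g)
    (Xser : (ℚ⟦X⟧)⟦X⟧)
    (hX0 : constantCoeff (R := ℚ⟦X⟧) Xser = 0)
    (hXeq : Xser - PowerSeries.C (R := ℚ⟦X⟧) PowerSeries.X *
        PowerSeries.substitute Xser (PowerSeries.map (PowerSeries.C (R := ℚ)) f)
      = PowerSeries.X) :
    ∀ d m : ℕ,
      coeff (R := ℚ) m (coeff (R := ℚ⟦X⟧) (d + 1)
          (PowerSeries.substitute Xser (PowerSeries.map (PowerSeries.C (R := ℚ)) H)))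
        = S (d + m) m / (d + 1).factorial :=
  sheffer_diagonal_egf_general g f S hS H hH Xser hX0 hXeq
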